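/- arXiv:2104.04902 — 5 statements merged into one kernel-verified Lean document; each statement's English description precedes it below -/
import Mathlib

section
/- Let $M, d$ be positive integers, $w \in \mathbb{R}^d$, and $o, q \in \{0,1,\dots,M\}^d$. Define the unary encoding $v(x) \in \{0,1\}^{Md}$ by concatenating, for each coordinate $i$, the vector of $x_i$ ones followed by $M - x_i$ zeros. Define the expanded weight vector $I(w) \in \mathbb{R}^{Md}$ by repeating each $w_i$ exactly $M$ times. Then $\sum_{i=1}^d w_i |o_i - q_i| = \sum_{k=1}^{Md} I(w)_k |v(o)_k - v(q)_k|$. -/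
/-! For a fixed position `j`, the bit `x ↦ unaryBit M x j` is monotone in `x`, so it commutes
with `max` and `min` and `|u a - u b| = u (max a b) - u (min a b)`. The code of `x` has `min M x`
ones, so for `a, b ≤ M` summing over `j` gives `max a b - min a b = |a - b|`; the weight `w i` is
constant along the block of coordinate `i`. -/

/-- The unary encoding bit: `u x j = 1` if the (1-based) position `j+1 ≤ x`, else `0`. -/
noncomputable def unaryBit (M : ℕ) (x : ℕ) (j : Fin M) : ℝ :=
  if (j : ℕ) < x then 1 else 0

open Finset

theorem sum_unaryBit (M a : ℕ) : ∑ j, unaryBit M a j = (min M a : ℕ) := by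
  simp only [unaryBit, sum_boole, Fin.card_filter_val_lt]

theorem monotone_unaryBit (M : ℕ) (j : Fin M) : Monotone fun x => unaryBit M x j := by
  intro a b hab
  dsimp only [unaryBit]
  split_ifs <;> norm_num
  omega

theorem abs_sub_unaryBit (M a b : ℕ) (j : Fin M) :
    |unaryBit M a j - unaryBit M b j| = unaryBit M (max a b) j - unaryBit M (min a b) j := by
  rw [← max_sub_min_eq_abs', (monotone_unaryBit M j).map_max, (monotone_unaryBit M j).map_min]

theorem sum_abs_sub_unaryBit {M a b : ℕ} (ha : a ≤ M) (hb : b ≤ M) :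
    ∑ j, |unaryBit M a j - unaryBit M b j| = |(a : ℝ) - b| := by
  simp only [abs_sub_unaryBit, sum_sub_distrib, sum_unaryBit]
  rw [min_eq_right (max_le ha hb), min_eq_right (min_le_of_left_le ha), ← max_sub_min_eq_abs',
    Nat.cast_max, Nat.cast_min]

theorem stmt_2_general (M d : ℕ) (w : Fin d → ℝ) (o q : Fin d → ℕ)
    (ho : ∀ i, o i ≤ M) (hq : ∀ i, q i ≤ M) :
    ∑ i, w i * |(o i : ℝ) - (q i : ℝ)| =
      ∑ i : Fin d, ∑ j : Fin M, w i * |unaryBit M (o i) j - unaryBit M (q i) j| := by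
  refine sum_congr rfl fun i _ => ?_
  rw [← mul_sum, sum_abs_sub_unaryBit (ho i) (hq i)]

theorem stmt_2 (M d : ℕ) (hM : 0 < M) (hd : 0 < d) (w : Fin d → ℝ) (o q : Fin d → ℕ)
    (ho : ∀ i, o i ≤ M) (hq : ∀ i, q i ≤ M) :
    ∑ i, w i * |(o i : ℝ) - (q i : ℝ)| =
      ∑ i : Fin d, ∑ j : Fin M, w i * |unaryBit M (o i) j - unaryBit M (q i) j| :=
  stmt_2_general M d w o q ho hq
end

section
/- Let $M, d$ be positive integers, $w \in \mathbb{R}^d$, and $o, q \in \{0,1,\dots,M\}^d$. With $P$ and $Q_w$ the preprocessing and query transformations into $\mathbb{R}^{2Md}$, the Euclidean distance satisfies $\|P(o) - Q_w(q)\|_2^2 = M\left(d + \sum_{i=1}^d w_i^2\right) - 2\left(M\sum_{i=1}^d w_i - d_w^{l_1}(o,q)\right)$, where $d_w^{l_1}(o,q) = \sum_{i=1}^d w_i|o_i - q_i|$. -/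
/-!
Each coordinate pair contributes `(cos x - w cos y)² + (sin x - w sin y)² = 1 + w² - 2 w cos (x - y)`.
For unary bits `a, b ∈ {0, 1}` the angle `π/2 (a - b)` has cosine `1 - |a - b|`, and the unary codes
of `o_i, q_i ≤ M` differ in exactly `|o_i - q_i|` positions, which produces the weighted `l₁` term.
-/

open Real

theorem cos_sub_mul_sq_add_sin_sub_mul_sq (x y w : ℝ) :
    (cos x - w * cos y) ^ 2 + (sin x - w * sin y) ^ 2 = 1 + w ^ 2 - 2 * w * cos (x - y) := by
  rw [cos_sub]
  linear_combination sin_sq_add_cos_sq x + w ^ 2 * sin_sq_add_cos_sq y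

theorem cos_pi_div_two_mul_sub {a b : ℝ} (ha : a = 0 ∨ a = 1) (hb : b = 0 ∨ b = 1) :
    cos (π / 2 * a - π / 2 * b) = 1 - |a - b| := by
  rcases ha with rfl | rfl <;> rcases hb with rfl | rfl <;> norm_num

namespace unaryBit

theorem eq_zero_or_one (M x : ℕ) (j : Fin M) : unaryBit M x j = 0 ∨ unaryBit M x j = 1 := by
  unfold unaryBit
  split_ifs <;> simp

theorem sum_eq {M x : ℕ} (hx : x ≤ M) : ∑ j : Fin M, unaryBit M x j = x := by
  simp only [unaryBit, Finset.sum_boole]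
  norm_cast
  rw [Fin.card_filter_val_lt, min_eq_right hx]

theorem abs_sub_eq_max_sub_min (M a b : ℕ) (j : Fin M) :
    |unaryBit M a j - unaryBit M b j| = unaryBit M (max a b) j - unaryBit M (min a b) j := by
  unfold unaryBit
  split_ifs <;> simp_all <;> omega

theorem sum_abs_sub {M a b : ℕ} (ha : a ≤ M) (hb : b ≤ M) :
    ∑ j : Fin M, |unaryBit M a j - unaryBit M b j| = |(a : ℝ) - b| := by
  simp only [abs_sub_eq_max_sub_min, Finset.sum_sub_distrib, sum_eq (max_le ha hb),
    sum_eq ((min_le_left a b).trans ha)]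
  push_cast
  exact max_sub_min_eq_abs' _ _

end unaryBit

theorem sum_cos_sub_sq_add_sin_sub_sq_unaryBit {M a b : ℕ} (ha : a ≤ M) (hb : b ≤ M) (w : ℝ) :
    ∑ j : Fin M, ((cos (π / 2 * unaryBit M a j) - w * cos (π / 2 * unaryBit M b j)) ^ 2 +
        (sin (π / 2 * unaryBit M a j) - w * sin (π / 2 * unaryBit M b j)) ^ 2) =
      M * (1 + w ^ 2 - 2 * w) + 2 * (w * |(a : ℝ) - b|) := by
  simp only [cos_sub_mul_sq_add_sin_sub_mul_sq,
    cos_pi_div_two_mul_sub (unaryBit.eq_zero_or_one M a _) (unaryBit.eq_zero_or_one M b _)]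
  rw [← unaryBit.sum_abs_sub ha hb, Finset.mul_sum]
  simp only [Finset.sum_sub_distrib, Finset.sum_add_distrib, Finset.sum_const, Finset.card_univ,
    Fintype.card_fin, nsmul_eq_mul, ← Finset.mul_sum]
  ring

theorem stmt_6_general (M d : ℕ) (w : Fin d → ℝ) (o q : Fin d → ℕ)
    (ho : ∀ i, o i ≤ M) (hq : ∀ i, q i ≤ M) :
    (∑ i : Fin d, ∑ j : Fin M,
        (Real.cos (π / 2 * unaryBit M (o i) j) - w i * Real.cos (π / 2 * unaryBit M (q i) j)) ^ 2) +
      (∑ i : Fin d, ∑ j : Fin M,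
        (Real.sin (π / 2 * unaryBit M (o i) j) - w i * Real.sin (π / 2 * unaryBit M (q i) j)) ^ 2) =
      (M : ℝ) * ((d : ℝ) + ∑ i, w i ^ 2) -
        2 * ((M : ℝ) * ∑ i, w i - ∑ i, w i * |(o i : ℝ) - (q i : ℝ)|) := by
  simp only [← Finset.sum_add_distrib, sum_cos_sub_sq_add_sin_sub_sq_unaryBit (ho _) (hq _)]
  simp only [Finset.sum_add_distrib, Finset.sum_sub_distrib, ← Finset.mul_sum, Finset.sum_const,
    Finset.card_univ, Fintype.card_fin, nsmul_eq_mul, mul_add, mul_sub, mul_one]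
  ring

theorem stmt_6 (M d : ℕ) (hM : 0 < M) (hd : 0 < d) (w : Fin d → ℝ) (o q : Fin d → ℕ)
    (ho : ∀ i, o i ≤ M) (hq : ∀ i, q i ≤ M) :
    (∑ i : Fin d, ∑ j : Fin M,
        (Real.cos (π / 2 * unaryBit M (o i) j) - w i * Real.cos (π / 2 * unaryBit M (q i) j)) ^ 2) +
      (∑ i : Fin d, ∑ j : Fin M,
        (Real.sin (π / 2 * unaryBit M (o i) j) - w i * Real.sin (π / 2 * unaryBit M (q i) j)) ^ 2) =
      (M : ℝ) * ((d : ℝ) + ∑ i, w i ^ 2) -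
        2 * ((M : ℝ) * ∑ i, w i - ∑ i, w i * |(o i : ℝ) - (q i : ℝ)|) :=
  stmt_6_general M d w o q ho hq
end

section
/- With $o^i = (i(R_1 - R_2), 0, 0)$, $q^j = (0, j(R_1 - R_2), R_1)$ and $w$ as defined ($w = (1,-1,-1)$ if $R_1 < 0$, $w = (1,-1,1)$ if $R_1 \ge 0$), for $R_1 < R_2$ and all positive integers $i, j$: if $i \le j$ then $d_w^{l_1}(o^i, q^j) \le R_1$, and if $i > j$ then $d_w^{l_1}(o^i, q^j) \ge R_2$. -/
/-!
Each of the three weighted terms is linear in the data: the first two contribute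
`i (R₂ - R₁)` and `-j (R₂ - R₁)`, and the weight `w₃ = ±1` is chosen as the sign of `R₁`,
so the third contributes exactly `R₁`. Hence the distance is `(i - j)(R₂ - R₁) + R₁`,
which is at most `R₁` when `i ≤ j` and at least `R₂` when `i ≥ j + 1`.
-/

lemma abs_natCast_mul_sub_of_le {a b : ℝ} (hab : a ≤ b) (n : ℕ) :
    |(n : ℝ) * (a - b)| = n * (b - a) := by
  rw [abs_mul, Nat.abs_cast, abs_sub_comm, abs_of_nonneg (sub_nonneg.mpr hab)]

lemma ite_neg_mul_abs_self (x : ℝ) : (if x < 0 then (-1 : ℝ) else 1) * |x| = x := by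
  split_ifs with hx
  · rw [abs_of_neg hx, neg_one_mul, neg_neg]
  · rw [abs_of_nonneg (not_lt.mp hx), one_mul]

theorem stmt_11_general (R₁ R₂ : ℝ) (h : R₁ < R₂) (i j : ℕ) :
    (i ≤ j →
      (1 : ℝ) * |(i : ℝ) * (R₁ - R₂) - 0| +
        (-1 : ℝ) * |(0 : ℝ) - (j : ℝ) * (R₁ - R₂)| +
        (if R₁ < 0 then (-1 : ℝ) else 1) * |(0 : ℝ) - R₁| ≤ R₁) ∧
    (j < i →
      R₂ ≤ (1 : ℝ) * |(i : ℝ) * (R₁ - R₂) - 0| +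
        (-1 : ℝ) * |(0 : ℝ) - (j : ℝ) * (R₁ - R₂)| +
        (if R₁ < 0 then (-1 : ℝ) else 1) * |(0 : ℝ) - R₁|) := by
  simp only [sub_zero, zero_sub, abs_neg, abs_natCast_mul_sub_of_le h.le, ite_neg_mul_abs_self]
  have hgap : 0 < R₂ - R₁ := sub_pos.mpr h
  refine ⟨fun hij => ?_, fun hij => ?_⟩
  · have hij' : (i : ℝ) ≤ j := by exact_mod_cast hij
    nlinarith
  · have hij' : (j : ℝ) + 1 ≤ i := by exact_mod_cast hij
    nlinarith

theorem stmt_11 (R₁ R₂ : ℝ) (h : R₁ < R₂) (i j : ℕ) (hi : 1 ≤ i) (hj : 1 ≤ j) :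
    (i ≤ j →
      (1 : ℝ) * |(i : ℝ) * (R₁ - R₂) - 0| +
        (-1 : ℝ) * |(0 : ℝ) - (j : ℝ) * (R₁ - R₂)| +
        (if R₁ < 0 then (-1 : ℝ) else 1) * |(0 : ℝ) - R₁| ≤ R₁) ∧
    (j < i →
      R₂ ≤ (1 : ℝ) * |(i : ℝ) * (R₁ - R₂) - 0| +
        (-1 : ℝ) * |(0 : ℝ) - (j : ℝ) * (R₁ - R₂)| +
        (if R₁ < 0 then (-1 : ℝ) else 1) * |(0 : ℝ) - R₁|) :=
  stmt_11_general R₁ R₂ h i j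
end

section
/- Let $S \subset \mathbb{R}^d$ contain at least two distinct points. Then for any reals $R_1 < R_2$ there is no function $p : S \times S \to [0,1]$ and no thresholds $P_1 > P_2$ such that for all $o, q \in S$ and all $w \in \mathbb{R}^d$: $d_w^{l_1}(o,q) \le R_1$ implies $p(o,q) \ge P_1$, and $d_w^{l_1}(o,q) \ge R_2$ implies $p(o,q) \le P_2$. Concretely: for any two distinct points $o \ne q$ in $S$, there exist weight vectors $w, w' \in \mathbb{R}^d$ with $d_w^{l_1}(o,q) = R_1$ and $d_{w'}^{l_1}(o,q) = R_2$. -/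
/-! For `o ≠ q` the weighted distance `w ↦ ∑ i, w i * |o i - q i|` is a nonzero linear functional
of the weights, hence onto `ℝ`: both `R₁` and `R₂` are attained at the same pair `(o, q)`, which would
force `P₁ ≤ p o q ≤ P₂ < P₁`. -/

theorem exists_dotProduct_eq_of_ne_zero {𝕜 ι : Type*} [Field 𝕜] [Fintype ι] {v : ι → 𝕜}
    (hv : v ≠ 0) (r : 𝕜) : ∃ w : ι → 𝕜, w ⬝ᵥ v = r := by
  classical
  obtain ⟨i, hi⟩ := Function.ne_iff.mp hv
  exact ⟨Pi.single i (r / v i), by rw [single_dotProduct, div_mul_cancel₀ r hi]⟩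

theorem abs_sub_ne_zero_of_ne {ι : Type*} {o q : ι → ℝ} (hne : o ≠ q) :
    (fun i => |o i - q i|) ≠ 0 := by
  contrapose! hne
  funext i
  simpa [sub_eq_zero] using congrFun hne i

theorem stmt_12_general (d : ℕ) (S : Set (Fin d → ℝ)) (o q : Fin d → ℝ)
    (hoS : o ∈ S) (hqS : q ∈ S) (hne : o ≠ q) (R₁ R₂ : ℝ) :
    (¬ ∃ (p : (Fin d → ℝ) → (Fin d → ℝ) → ℝ) (P₁ P₂ : ℝ),
        P₂ < P₁ ∧ (∀ o' ∈ S, ∀ q' ∈ S, p o' q' ∈ Set.Icc (0 : ℝ) 1) ∧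
        (∀ o' ∈ S, ∀ q' ∈ S, ∀ w : Fin d → ℝ,
          (∑ i, w i * |o' i - q' i|) ≤ R₁ → P₁ ≤ p o' q') ∧
        (∀ o' ∈ S, ∀ q' ∈ S, ∀ w : Fin d → ℝ,
          R₂ ≤ (∑ i, w i * |o' i - q' i|) → p o' q' ≤ P₂)) ∧
    (∃ w w' : Fin d → ℝ,
      (∑ i, w i * |o i - q i|) = R₁ ∧ (∑ i, w' i * |o i - q i|) = R₂) := by
  obtain ⟨w, hw⟩ := exists_dotProduct_eq_of_ne_zero (abs_sub_ne_zero_of_ne hne) R₁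
  obtain ⟨w', hw'⟩ := exists_dotProduct_eq_of_ne_zero (abs_sub_ne_zero_of_ne hne) R₂
  refine ⟨?_, w, w', hw, hw'⟩
  rintro ⟨p, P₁, P₂, hP, -, hnear, hfar⟩
  have hP₁ := hnear o hoS q hqS w hw.le
  have hP₂ := hfar o hoS q hqS w' hw'.ge
  linarith

theorem stmt_12 (d : ℕ) (S : Set (Fin d → ℝ)) (o q : Fin d → ℝ)
    (hoS : o ∈ S) (hqS : q ∈ S) (hne : o ≠ q) (R₁ R₂ : ℝ) (h12 : R₁ < R₂) :
    (¬ ∃ (p : (Fin d → ℝ) → (Fin d → ℝ) → ℝ) (P₁ P₂ : ℝ),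
        P₂ < P₁ ∧ (∀ o' ∈ S, ∀ q' ∈ S, p o' q' ∈ Set.Icc (0 : ℝ) 1) ∧
        (∀ o' ∈ S, ∀ q' ∈ S, ∀ w : Fin d → ℝ,
          (∑ i, w i * |o' i - q' i|) ≤ R₁ → P₁ ≤ p o' q') ∧
        (∀ o' ∈ S, ∀ q' ∈ S, ∀ w : Fin d → ℝ,
          R₂ ≤ (∑ i, w i * |o' i - q' i|) → p o' q' ≤ P₂)) ∧
    (∃ w w' : Fin d → ℝ,
      (∑ i, w i * |o i - q i|) = R₁ ∧ (∑ i, w' i * |o i - q i|) = R₂) :=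
  stmt_12_general d S o q hoS hqS hne R₁ R₂
end

section
/- Let $M, d$ be positive integers, $q \in \{0,1,\dots,M\}^d$, $w \in \mathbb{R}^d$, and $a \in \mathbb{R}^{2Md}$ written in blocks as before, with suffix sums $s_i(k) = \sum_{j=k}^M a_{ij}$ (and $s_i(M+1)=0$) and prefix sums $t_i(k) = \sum_{j=1}^{k-1} a_{(d+i)j}$ (and $t_i(1)=0$). Then $\langle a, Q_w(q) \rangle = \sum_{i=1}^d w_i \left( s_i(q_i + 1) + t_i(q_i + 1) \right)$, where $Q_w(q)$ is the query transformation. -/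
open Real

/-- Suffix sum `s_i(k) = ∑_{j=k}^M a_{ij}` of the `i`-th cosine block (1-based positions). -/
def suffixSum (M : ℕ) (a : Fin M → ℝ) (k : ℕ) : ℝ :=
  ∑ j : Fin M, if k ≤ (j : ℕ) + 1 then a j else 0

/-- Prefix sum `t_i(k) = ∑_{j=1}^{k-1} a_{(d+i)j}` of the `i`-th sine block (1-based positions). -/
def prefixSum (M : ℕ) (a : Fin M → ℝ) (k : ℕ) : ℝ :=
  ∑ j : Fin M, if (j : ℕ) + 1 < k then a j else 0

open Finset

theorem cos_pi_div_two_mul_unaryBit (M x : ℕ) (j : Fin M) :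
    cos (π / 2 * unaryBit M x j) = if (j : ℕ) < x then 0 else 1 := by
  unfold unaryBit
  split_ifs <;> simp

theorem sin_pi_div_two_mul_unaryBit (M x : ℕ) (j : Fin M) :
    sin (π / 2 * unaryBit M x j) = unaryBit M x j := by
  unfold unaryBit
  split_ifs <;> simp

theorem sum_mul_cos_unaryBit (M x : ℕ) (a : Fin M → ℝ) :
    ∑ j, a j * cos (π / 2 * unaryBit M x j) = suffixSum M a (x + 1) := by
  refine sum_congr rfl fun j _ => ?_
  rw [cos_pi_div_two_mul_unaryBit]
  by_cases h : (j : ℕ) < x <;> simp [h]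

theorem sum_mul_sin_unaryBit (M x : ℕ) (a : Fin M → ℝ) :
    ∑ j, a j * sin (π / 2 * unaryBit M x j) = prefixSum M a (x + 1) := by
  refine sum_congr rfl fun j _ => ?_
  rw [sin_pi_div_two_mul_unaryBit, unaryBit]
  by_cases h : (j : ℕ) < x <;> simp [h]

theorem stmt_17_general (M d : ℕ) (q : Fin d → ℕ)
    (w : Fin d → ℝ) (a₁ a₂ : Fin d → Fin M → ℝ) :
    (∑ i : Fin d, ∑ j : Fin M, a₁ i j * (w i * Real.cos (π / 2 * unaryBit M (q i) j))) +
      (∑ i : Fin d, ∑ j : Fin M, a₂ i j * (w i * Real.sin (π / 2 * unaryBit M (q i) j))) =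
      ∑ i : Fin d, w i * (suffixSum M (a₁ i) (q i + 1) + prefixSum M (a₂ i) (q i + 1)) := by
  simp_rw [mul_left_comm _ (w _), ← mul_sum, sum_mul_cos_unaryBit, sum_mul_sin_unaryBit,
    ← sum_add_distrib, mul_add]

theorem stmt_17 (M d : ℕ) (hM : 0 < M) (hd : 0 < d) (q : Fin d → ℕ) (hq : ∀ i, q i ≤ M)
    (w : Fin d → ℝ) (a₁ a₂ : Fin d → Fin M → ℝ) :
    (∑ i : Fin d, ∑ j : Fin M, a₁ i j * (w i * Real.cos (π / 2 * unaryBit M (q i) j))) +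
      (∑ i : Fin d, ∑ j : Fin M, a₂ i j * (w i * Real.sin (π / 2 * unaryBit M (q i) j))) =
      ∑ i : Fin d, w i * (suffixSum M (a₁ i) (q i + 1) + prefixSum M (a₂ i) (q i + 1)) :=
  stmt_17_general M d q w a₁ a₂
end
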